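/- Let ℓ ≥ 1 and let z = a + ib with b ∈ [-π/2, π/2]. Let r(z) = φ_ℓ(z) - φ_{ℓ+1}(z). Then |Re(r(z))| < |Re(φ_ℓ(z))| and |Im(r(z))| ≤ |Im(φ_ℓ(z))|, where the second inequality is strict whenever Im(φ_ℓ(z)) ≠ 0. -/

import Mathlib

noncomputable def phi (ℓ : ℕ) (z : ℂ) : ℂ :=
  ∑' k : ℕ, z ^ k / (Nat.factorial (k + ℓ) : ℂ)

/-!
Writing `φ_{m+1}(z) = (1/m!) ∫₀¹ (1-τ)^m e^{τz} dτ`, the real and imaginary parts of `φ_{m+1}(z)`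
are the same integrals against the real weights `e^{τa} cos(τb)` and `e^{τa} sin(τb)`. For
`0 ≤ b ≤ π/2` both weights are nonnegative on `(0,1)`, the first one even positive, and for such a
weight `g` the numbers `(1/n!) ∫₀¹ (1-τ)^n g(τ) dτ` are nonnegative and decrease in `n`. Hence
`0 ≤ φ_{ℓ+1} ≤ φ_ℓ` componentwise, which gives both bounds on `φ_ℓ - φ_{ℓ+1}`; the case `b < 0`
follows by complex conjugation.
-/

open Set Nat Complex MeasureTheory
open scoped Interval ComplexConjugate

noncomputable def phiIntegral {E : Type*} [NormedAddCommGroup E] [NormedSpace ℝ E]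
    (g : ℝ → E) (n : ℕ) : E :=
  (n ! : ℝ)⁻¹ • ∫ τ in (0 : ℝ)..1, (1 - τ) ^ n • g τ

theorem intervalIntegrable_one_sub_pow_smul {E : Type*} [NormedAddCommGroup E]
    [NormedSpace ℝ E] {g : ℝ → E} (hg : Continuous g) (n : ℕ) :
    IntervalIntegrable (fun τ : ℝ => (1 - τ) ^ n • g τ) volume 0 1 :=
  (by fun_prop : Continuous fun τ : ℝ => (1 - τ) ^ n • g τ).intervalIntegrable 0 1

theorem ContinuousLinearMap.map_phiIntegral {E F : Type*} [NormedAddCommGroup E]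
    [NormedSpace ℝ E] [CompleteSpace E] [NormedAddCommGroup F] [NormedSpace ℝ F]
    [CompleteSpace F] (L : E →L[ℝ] F) {g : ℝ → E} (hg : Continuous g) (n : ℕ) :
    L (phiIntegral g n) = phiIntegral (fun τ => L (g τ)) n := by
  rw [phiIntegral, phiIntegral, map_smul,
    ← L.intervalIntegral_comp_comm (intervalIntegrable_one_sub_pow_smul hg n)]
  simp only [map_smul]

section RealWeight

variable {g : ℝ → ℝ}

theorem phiIntegral_nonneg (hg : Continuous g) (hg0 : ∀ τ ∈ Ioo (0 : ℝ) 1, 0 ≤ g τ) (n : ℕ) :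
    0 ≤ phiIntegral g n := by
  have hI := intervalIntegral.integral_mono_on_of_le_Ioo (f := fun _ => (0 : ℝ)) zero_le_one
    intervalIntegrable_const (intervalIntegrable_one_sub_pow_smul hg n)
    fun τ hτ => smul_nonneg (pow_nonneg (by linarith [hτ.2]) n) (hg0 τ hτ)
  rw [intervalIntegral.integral_zero] at hI
  exact smul_nonneg (by positivity) hI

theorem phiIntegral_pos (hg : Continuous g) (hpos : ∀ τ ∈ Ioo (0 : ℝ) 1, 0 < g τ) (n : ℕ) :
    0 < phiIntegral g n := by
  have hI : 0 < ∫ τ in (0 : ℝ)..1, (1 - τ) ^ n • g τ := by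
    refine intervalIntegral.intervalIntegral_pos_of_pos_on
      (intervalIntegrable_one_sub_pow_smul hg _) (fun τ hτ => ?_) zero_lt_one
    exact smul_pos (pow_pos (by linarith [hτ.2]) n) (hpos τ hτ)
  exact smul_pos (by positivity) hI

theorem phiIntegral_succ_le (hg : Continuous g) (hg0 : ∀ τ ∈ Ioo (0 : ℝ) 1, 0 ≤ g τ) (n : ℕ) :
    phiIntegral g (n + 1) ≤ phiIntegral g n := by
  set I : ℕ → ℝ := fun k => ∫ τ in (0 : ℝ)..1, (1 - τ) ^ k • g τ
  have hI_nonneg : 0 ≤ I (n + 1) := by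
    have := phiIntegral_nonneg hg hg0 (n + 1)
    rwa [phiIntegral, smul_eq_mul, mul_nonneg_iff_of_pos_left (by positivity)] at this
  have hI_anti : I (n + 1) ≤ I n := by
    refine intervalIntegral.integral_mono_on_of_le_Ioo zero_le_one
      (intervalIntegrable_one_sub_pow_smul hg _)
      (intervalIntegrable_one_sub_pow_smul hg _) (fun τ hτ => ?_)
    exact mul_le_mul_of_nonneg_right
      (pow_le_pow_of_le_one (by linarith [hτ.2]) (by linarith [hτ.1]) n.le_succ) (hg0 τ hτ)
  have hfact : ((n + 1)! : ℝ)⁻¹ ≤ (n ! : ℝ)⁻¹ :=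
    inv_anti₀ (by positivity) (by exact_mod_cast Nat.factorial_le n.le_succ)
  calc phiIntegral g (n + 1) = ((n + 1)! : ℝ)⁻¹ * I (n + 1) := rfl
    _ ≤ (n ! : ℝ)⁻¹ * I (n + 1) := mul_le_mul_of_nonneg_right hfact hI_nonneg
    _ ≤ (n ! : ℝ)⁻¹ * I n := mul_le_mul_of_nonneg_left hI_anti (by positivity)

theorem abs_phiIntegral_sub_succ_le (hg : Continuous g) (hg0 : ∀ τ ∈ Ioo (0 : ℝ) 1, 0 ≤ g τ)
    (n : ℕ) : |phiIntegral g n - phiIntegral g (n + 1)| ≤ |phiIntegral g n| := by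
  have h0 := phiIntegral_nonneg hg hg0 (n + 1)
  have h1 := phiIntegral_succ_le hg hg0 n
  rw [abs_of_nonneg (by linarith), abs_of_nonneg (by linarith)]
  linarith

theorem abs_phiIntegral_sub_succ_lt (hg : Continuous g) (hpos : ∀ τ ∈ Ioo (0 : ℝ) 1, 0 < g τ)
    (n : ℕ) : |phiIntegral g n - phiIntegral g (n + 1)| < |phiIntegral g n| := by
  have h0 := phiIntegral_pos hg hpos (n + 1)
  have h1 := phiIntegral_succ_le hg (fun τ hτ => (hpos τ hτ).le) n
  rw [abs_of_nonneg (by linarith), abs_of_nonneg (by linarith)]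
  linarith

end RealWeight

theorem integral_pow_mul_one_sub_pow (k m : ℕ) :
    ∫ τ in (0 : ℝ)..1, τ ^ k * (1 - τ) ^ m = k ! * m ! / (k + m + 1)! := by
  induction m generalizing k with
  | zero =>
    simp [integral_pow, Nat.factorial_succ]
    field_simp
  | succ m ih =>
    have hsplit : ∀ τ : ℝ, τ ^ k * (1 - τ) ^ (m + 1)
        = τ ^ k * (1 - τ) ^ m - τ ^ (k + 1) * (1 - τ) ^ m := fun τ => by ring
    simp_rw [hsplit]
    rw [intervalIntegral.integral_sub ((by fun_prop : Continuous _).intervalIntegrable 0 1)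
      ((by fun_prop : Continuous _).intervalIntegrable 0 1), ih, ih,
      show k + 1 + m + 1 = k + m + 1 + 1 by ring, show k + (m + 1) + 1 = k + m + 1 + 1 by ring]
    simp only [Nat.factorial_succ, Nat.cast_mul]
    field_simp
    push_cast
    ring

theorem phi_succ_eq_phiIntegral (m : ℕ) (z : ℂ) :
    phi (m + 1) z = phiIntegral (fun τ : ℝ => exp (τ * z)) m := by
  set F : ℕ → ℝ → ℂ := fun k τ => (1 - τ) ^ m • ((τ * z) ^ k / k !)
  have hF : ∀ k τ, F k τ = (τ ^ k * (1 - τ) ^ m) • (z ^ k / k !) := fun k τ => by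
    simp only [F, real_smul, ofReal_mul, ofReal_pow, ofReal_sub, ofReal_one]
    ring
  have hF_norm : ∀ k, ∀ τ ∈ Ι (0 : ℝ) 1, ‖F k τ‖ ≤ ‖z‖ ^ k / k ! := fun k τ hτ => by
    rw [uIoc_of_le zero_le_one] at hτ
    have h1τ : 0 ≤ 1 - τ := sub_nonneg.mpr hτ.2
    rw [hF, norm_smul, norm_div, norm_pow, RCLike.norm_natCast, Real.norm_eq_abs,
      abs_of_nonneg (mul_nonneg (pow_nonneg hτ.1.le k) (pow_nonneg h1τ m))]
    refine mul_le_of_le_one_left (by positivity) ?_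
    exact mul_le_one₀ (pow_le_one₀ hτ.1.le hτ.2) (pow_nonneg h1τ m)
      (pow_le_one₀ h1τ (by linarith [hτ.1]))
  have hsum : HasSum (fun k => ∫ τ in (0 : ℝ)..1, F k τ)
      (∫ τ in (0 : ℝ)..1, (1 - τ) ^ m • exp (τ * z)) := by
    refine intervalIntegral.hasSum_integral_of_dominated_convergence (fun k _ => ‖z‖ ^ k / k !)
      (fun k => (by fun_prop : Continuous (F k)).aestronglyMeasurable)
      (fun k => ae_of_all _ (hF_norm k))
      (ae_of_all _ fun _ _ => Real.summable_pow_div_factorial ‖z‖) intervalIntegrable_const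
      (ae_of_all _ fun τ _ => ?_)
    rw [exp_eq_exp_ℂ]
    exact (NormedSpace.expSeries_div_hasSum_exp (τ * z : ℂ)).const_smul _
  have hterm : ∀ k, ∫ τ in (0 : ℝ)..1, F k τ = (m ! : ℝ) • (z ^ k / (k + m + 1)! : ℂ) := by
    intro k
    simp_rw [hF]
    rw [intervalIntegral.integral_smul_const, integral_pow_mul_one_sub_pow, real_smul,
      real_smul]
    have : (k ! : ℂ) ≠ 0 := Nat.cast_ne_zero.mpr (Nat.factorial_ne_zero k)
    push_cast
    field_simp
  rw [funext hterm] at hsum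
  have hphi := hsum.const_smul (m ! : ℝ)⁻¹
  simp only [smul_smul, inv_mul_cancel₀ (by positivity : (m ! : ℝ) ≠ 0), one_smul] at hphi
  exact hphi.tsum_eq

theorem re_phi_succ (m : ℕ) (z : ℂ) :
    (phi (m + 1) z).re = phiIntegral (fun τ : ℝ => (exp (τ * z)).re) m := by
  rw [phi_succ_eq_phiIntegral, ← reCLM_apply, reCLM.map_phiIntegral (by fun_prop)]
  rfl

theorem im_phi_succ (m : ℕ) (z : ℂ) :
    (phi (m + 1) z).im = phiIntegral (fun τ : ℝ => (exp (τ * z)).im) m := by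
  rw [phi_succ_eq_phiIntegral, ← imCLM_apply, imCLM.map_phiIntegral (by fun_prop)]
  rfl

theorem phi_conj (ℓ : ℕ) (z : ℂ) : phi ℓ (conj z) = conj (phi ℓ z) := by
  simp only [phi, conj_tsum, map_div₀, map_pow, map_natCast]

theorem im_phi_eq_zero {z : ℂ} (hz : z.im = 0) (ℓ : ℕ) : (phi ℓ z).im = 0 := by
  rw [← conj_eq_iff_im, ← phi_conj, conj_eq_iff_im.mpr hz]

theorem re_exp_ofReal_mul_pos {z : ℂ} (hz : |z.im| ≤ Real.pi / 2) {τ : ℝ}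
    (hτ : τ ∈ Ioo (0 : ℝ) 1) : 0 < (exp (τ * z)).re := by
  have hcos : 0 < Real.cos (τ * z.im) := by
    refine Real.cos_pos_of_mem_Ioo (abs_lt.mp ?_)
    calc |τ * z.im| = τ * |z.im| := by rw [abs_mul, abs_of_pos hτ.1]
      _ ≤ τ * (Real.pi / 2) := mul_le_mul_of_nonneg_left hz hτ.1.le
      _ < Real.pi / 2 := mul_lt_of_lt_one_left (by positivity) hτ.2
  rw [exp_re, re_ofReal_mul, im_ofReal_mul]
  positivity

theorem im_exp_ofReal_mul_nonneg {z : ℂ} (h0 : 0 ≤ z.im) (hπ : z.im ≤ Real.pi) {τ : ℝ}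
    (hτ : τ ∈ Ioo (0 : ℝ) 1) : 0 ≤ (exp (τ * z)).im := by
  have hsin : 0 ≤ Real.sin (τ * z.im) :=
    Real.sin_nonneg_of_nonneg_of_le_pi (mul_nonneg hτ.1.le h0) (by nlinarith [hτ.2])
  rw [exp_im, re_ofReal_mul, im_ofReal_mul]
  positivity

theorem im_exp_ofReal_mul_pos {z : ℂ} (h0 : 0 < z.im) (hπ : z.im ≤ Real.pi) {τ : ℝ}
    (hτ : τ ∈ Ioo (0 : ℝ) 1) : 0 < (exp (τ * z)).im := by
  have hsin : 0 < Real.sin (τ * z.im) :=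
    Real.sin_pos_of_pos_of_lt_pi (mul_pos hτ.1 h0) (by nlinarith [hτ.2])
  rw [exp_im, re_ofReal_mul, im_ofReal_mul]
  positivity

theorem residual_bounds (ℓ : ℕ) (hℓ : 1 ≤ ℓ) (z : ℂ)
    (hz : z.im ∈ Set.Icc (-(Real.pi / 2)) (Real.pi / 2)) :
    |(phi ℓ z - phi (ℓ + 1) z).re| < |(phi ℓ z).re| ∧
    |(phi ℓ z - phi (ℓ + 1) z).im| ≤ |(phi ℓ z).im| ∧
    ((phi ℓ z).im ≠ 0 → |(phi ℓ z - phi (ℓ + 1) z).im| < |(phi ℓ z).im|) := by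
  obtain ⟨m, rfl⟩ : ∃ m, ℓ = m + 1 := ⟨ℓ - 1, by omega⟩
  wlog hb : 0 ≤ z.im generalizing z
  · have h := this (conj z) (by simp only [conj_im]; constructor <;> linarith [hz.1, hz.2])
      (by simp only [conj_im]; linarith)
    simpa only [phi_conj, ← map_sub, conj_re, conj_im, abs_neg, ne_eq, neg_eq_zero] using h
  have hπ : z.im ≤ Real.pi := by linarith [hz.2, Real.pi_pos]
  have hb_pos : (phi (m + 1) z).im ≠ 0 → 0 < z.im := fun hne =>
    hb.lt_of_ne' fun h => hne (im_phi_eq_zero h _)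
  have hexp : Continuous fun τ : ℝ => exp (τ * z) := by fun_prop
  rw [sub_re, sub_im, re_phi_succ m, re_phi_succ (m + 1), im_phi_succ m, im_phi_succ (m + 1)]
  rw [im_phi_succ m] at hb_pos
  refine ⟨abs_phiIntegral_sub_succ_lt (continuous_re.comp hexp)
      (fun τ => re_exp_ofReal_mul_pos (abs_le.mpr hz)) m,
    abs_phiIntegral_sub_succ_le (continuous_im.comp hexp)
      (fun τ => im_exp_ofReal_mul_nonneg hb hπ) m,
    fun hne => abs_phiIntegral_sub_succ_lt (continuous_im.comp hexp)
      (fun τ => im_exp_ofReal_mul_pos (hb_pos hne) hπ) m⟩
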